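/- arXiv:math/0306212 — 2 statements merged into one kernel-verified Lean document; each statement's English description precedes it below -/
import Mathlib

section
/- Let N be a quotient of a topologically free K[[ℏ]]-module by a closed submodule, M a K-vector space, and f : N → M[[ℏ]] a continuous K[[ℏ]]-linear map such that the reduction of f modulo ℏ is an isomorphism. Then f is an isomorphism; in particular N is torsion-free over K[[ℏ]]. -/
set_option maxHeartbeats 800000

open Pointwise in
lemma aux_mem_span_pow_smul {R M : Type*} [CommRing R] [AddCommGroup M] [Module R M]
    (r : R) (k : ℕ) (x : M) :
    x ∈ (Ideal.span {r})^k • (⊤ : Submodule R M) ↔ ∃ y, r^k • y = x := by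
  rw [Ideal.span_singleton_pow, Submodule.ideal_span_singleton_smul]
  constructor
  · intro h
    have h' : x ∈ (r ^ k • (⊤ : Submodule R M) : Set M) := h
    obtain ⟨y, -, hy⟩ := Set.mem_smul_set.mp h'
    exact ⟨y, hy⟩
  · rintro ⟨y, rfl⟩
    exact Submodule.smul_mem_pointwise_smul y _ _ trivial

/- Hensel's lemma for modules over K[[ℏ]]: if `N` is complete and separated (a quotient of a
topologically free module by a closed submodule), `P` plays the role of `M[[ℏ]]` (complete,
separated, ℏ-torsion-free), and `f : N → P` is `K[[ℏ]]`-linear with bijective reduction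
mod ℏ, then `f` is bijective; in particular `N` is ℏ-torsion-free. -/
theorem stmt0 (K : Type*) [Field K] [CharZero K]
    (N P : Type*) [AddCommGroup N] [Module (PowerSeries K) N]
    [AddCommGroup P] [Module (PowerSeries K) P]
    [IsAdicComplete (Ideal.span {(PowerSeries.X : PowerSeries K)}) N]
    [IsAdicComplete (Ideal.span {(PowerSeries.X : PowerSeries K)}) P]
    (hPtf : ∀ p : P, (PowerSeries.X : PowerSeries K) • p = 0 → p = 0)
    (f : N →ₗ[PowerSeries K] P)
    (hmod : Function.Bijective
      (Submodule.mapQ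
        ((Ideal.span {(PowerSeries.X : PowerSeries K)}) • (⊤ : Submodule (PowerSeries K) N))
        ((Ideal.span {(PowerSeries.X : PowerSeries K)}) • (⊤ : Submodule (PowerSeries K) P))
        f
        (by
          rw [← Submodule.map_le_iff_le_comap, Submodule.map_smul'']
          exact smul_mono_right (Ideal.span {(PowerSeries.X : PowerSeries K)}) le_top))) :
    Function.Bijective f ∧ ∀ x : N, (PowerSeries.X : PowerSeries K) • x = 0 → x = 0 := by
  set R := PowerSeries K
  set X : R := PowerSeries.X
  set I : Ideal R := Ideal.span {X} with hI
  -- reduction mod I: surjectivity statement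
  have hsurj1 : ∀ p : P, ∃ n : N, p - f n ∈ I • (⊤ : Submodule R P) := by
    intro p
    obtain ⟨z, hz⟩ := hmod.2 (Submodule.Quotient.mk p)
    obtain ⟨n, rfl⟩ := Submodule.Quotient.mk_surjective _ z
    rw [Submodule.mapQ_apply] at hz
    refine ⟨n, ?_⟩
    have := (Submodule.Quotient.eq _).mp hz
    simpa using (Submodule.neg_mem _ this)
  -- reduction mod I: injectivity statement
  have hinj1 : ∀ n : N, f n ∈ I • (⊤ : Submodule R P) → n ∈ I • (⊤ : Submodule R N) := by
    intro n hn
    have h0 : (Submodule.Quotient.mk (f n) : P ⧸ (I • ⊤ : Submodule R P)) = 0 :=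
      (Submodule.Quotient.mk_eq_zero _).mpr hn
    have := hmod.1 (a₁ := Submodule.Quotient.mk n) (a₂ := 0)
      (by rw [Submodule.mapQ_apply, map_zero]; exact h0)
    exact (Submodule.Quotient.mk_eq_zero _).mp this
  -- iterated torsion-freeness of P
  have hPtfk : ∀ (k : ℕ) (p : P), X ^ k • p = 0 → p = 0 := by
    intro k
    induction k with
    | zero => intro p hp; simpa using hp
    | succ k ih =>
      intro p hp
      apply hPtf
      apply ih
      rw [smul_smul, ← pow_succ]
      exact hp
  -- f maps I^k • ⊤ into I^k • ⊤
  have hmap : ∀ (k : ℕ) (n : N), n ∈ (I ^ k • ⊤ : Submodule R N) →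
      f n ∈ (I ^ k • ⊤ : Submodule R P) := by
    intro k n hn
    obtain ⟨y, rfl⟩ := (aux_mem_span_pow_smul X k n).mp (by rwa [← hI])
    rw [map_smul]
    exact (aux_mem_span_pow_smul X k _).mpr ⟨f y, rfl⟩
  -- injectivity of f
  have hinj : Function.Injective f := by
    rw [injective_iff_map_eq_zero]
    intro n hn
    have key : ∀ k : ℕ, n ∈ (I ^ k • ⊤ : Submodule R N) := by
      intro k
      induction k with
      | zero => simp
      | succ k ih =>
        obtain ⟨m, rfl⟩ := (aux_mem_span_pow_smul X k n).mp ih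
        have hfm : f m = 0 := by
          apply hPtfk k
          rw [← map_smul]
          exact hn
        obtain ⟨m', rfl⟩ := (aux_mem_span_pow_smul X 1 m).mp
          (by simpa [hI, pow_one] using hinj1 m (by rw [hfm]; exact Submodule.zero_mem _))
        refine (aux_mem_span_pow_smul X (k + 1) _).mpr ⟨m', ?_⟩
        rw [smul_smul, pow_one, ← pow_succ]
    exact IsHausdorff.haus (inferInstance : IsHausdorff I N) n
      (fun k => SModEq.sub_mem.mpr (by simpa using key k))
  -- surjectivity of f
  have hsurj : Function.Surjective f := by
    intro p
    -- one refinement step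
    have step : ∀ (k : ℕ) (n : N), p - f n ∈ (I ^ k • ⊤ : Submodule R N).map f ⊔ (I ^ k • ⊤) →
        True := fun _ _ _ => trivial
    have step' : ∀ (k : ℕ) (n : N), p - f n ∈ (I ^ k • ⊤ : Submodule R P) →
        ∃ n' : N, p - f (n + n') ∈ (I ^ (k + 1) • ⊤ : Submodule R P) ∧
          n' ∈ (I ^ k • ⊤ : Submodule R N) := by
      intro k n hn
      obtain ⟨q, hq⟩ := (aux_mem_span_pow_smul X k _).mp hn
      obtain ⟨m, hm⟩ := hsurj1 q
      obtain ⟨q', hq'⟩ := (aux_mem_span_pow_smul X 1 _).mp (by simpa [hI, pow_one] using hm)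
      refine ⟨X ^ k • m, ?_, (aux_mem_span_pow_smul X k _).mpr ⟨m, rfl⟩⟩
      have : p - f (n + X ^ k • m) = X ^ k • (q - f m) := by
        rw [map_add, map_smul, smul_sub, hq]; abel
      rw [this, ← hq', smul_smul, pow_one, ← pow_succ]
      exact (aux_mem_span_pow_smul X (k + 1) _).mpr ⟨q', rfl⟩
    -- build the approximating sequence
    let g : ∀ k : ℕ, {n : N // p - f n ∈ (I ^ k • ⊤ : Submodule R P)} := fun k =>
      Nat.rec ⟨0, by simp⟩
        (fun k ih => ⟨ih.1 + (step' k ih.1 ih.2).choose, (step' k ih.1 ih.2).choose_spec.1⟩) k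
    have hgsucc : ∀ k : ℕ, (g (k + 1)).1 - (g k).1 ∈ (I ^ k • ⊤ : Submodule R N) := by
      intro k
      have : (g (k + 1)).1 = (g k).1 + (step' k (g k).1 (g k).2).choose := rfl
      rw [this]
      simpa using (step' k (g k).1 (g k).2).choose_spec.2
    have hchain : ∀ {a b : ℕ}, a ≤ b →
        (g a).1 ≡ (g b).1 [SMOD (I ^ a • ⊤ : Submodule R N)] := by
      intro a b hab
      induction b with
      | zero => rw [Nat.le_zero.mp hab]
      | succ b ih =>
        rcases Nat.lt_succ_iff_lt_or_eq.mp (Nat.lt_succ_of_le hab) with h | h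
        · refine (ih (Nat.lt_succ_iff.mp h)).trans ?_
          refine SModEq.sub_mem.mpr ?_
          have hmem := hgsucc b
          have hle : (I ^ b • ⊤ : Submodule R N) ≤ I ^ a • ⊤ :=
            Submodule.smul_mono_left (Ideal.pow_le_pow_right (Nat.lt_succ_iff.mp h))
          simpa using Submodule.neg_mem _ (hle hmem)
        · rw [h]
    obtain ⟨L, hL⟩ := IsPrecomplete.prec (inferInstance : IsPrecomplete I N)
      (f := fun k => (g k).1) (fun {a b} h => hchain h)
    refine ⟨L, ?_⟩
    have : ∀ k : ℕ, f L - p ≡ 0 [SMOD (I ^ k • ⊤ : Submodule R P)] := by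
      intro k
      refine SModEq.sub_mem.mpr ?_
      have h1 : f L - f (g k).1 ∈ (I ^ k • ⊤ : Submodule R P) := by
        have := SModEq.sub_mem.mp (hL k)
        have := hmap k _ this
        rw [map_sub] at this
        simpa using Submodule.neg_mem _ this
      have h2 : f (g k).1 - p ∈ (I ^ k • ⊤ : Submodule R P) := by
        simpa using Submodule.neg_mem _ (g k).2
      simpa using Submodule.add_mem _ h1 h2
    have := IsHausdorff.haus (inferInstance : IsHausdorff I P) (f L - p) this
    rwa [sub_eq_zero] at this
  refine ⟨⟨hinj, hsurj⟩, ?_⟩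
  intro x hx
  apply hinj
  rw [map_zero]
  apply hPtf
  rw [← map_smul, hx, map_zero]
end

section
/- Let g be a Lie algebra over a field K of characteristic zero and let p_1 = Σ_{n≥1} ((−1)^{n−1}/n) m^{(n)} ∘ (id − η∘ε)^{⊗n} ∘ Δ^{(n)} be the first Eulerian idempotent of U(g). Then under the symmetrization isomorphism Sym : S(g) → U(g), p_m corresponds to the projection onto the m-th symmetric component S^m(g). -/
/-
By polarization, `m! • Sym(x₁, …, x_m)` is a signed sum of powers `ι(z)^m` with `z ∈ g`, so it
suffices to compute `p_{m'}` on powers `y^n` of a primitive element `y`. There `Δ(y^n)` is given by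
the binomial formula, and induction on `k` gives `J^{*k}(y^n) = n! [t^n] (e^t - 1)^k • y^n` for
`J = id - η ∘ ε`. Hence `p_{m'}(y^n) = n! [t^n] λ^{(m')}(e^t - 1) • y^n`, and
`λ^{(m')}(e^t - 1) = (log e^t)^{m'} / m'! = t^{m'} / m'!`.
-/

open TensorProduct

noncomputable section

variable (K : Type*) [Field K] [CharZero K]
variable (L : Type*) [LieRing L] [LieAlgebra K L]

local notation "UE" => UniversalEnvelopingAlgebra K L

/-- Convolution product on endomorphisms of `U(g)`. -/
def conv (Δ : UE →ₐ[K] UE ⊗[K] UE) (f g : UE →ₗ[K] UE) : UE →ₗ[K] UE :=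
  LinearMap.mul' K UE ∘ₗ TensorProduct.map f g ∘ₗ Δ.toLinearMap

/-- Convolution powers of `J = id − η∘ε`. -/
def convPowJ (Δ : UE →ₐ[K] UE ⊗[K] UE) (ε : UE →ₐ[K] K) : ℕ → (UE →ₗ[K] UE)
  | 0 => Algebra.linearMap K UE ∘ₗ ε.toLinearMap
  | n + 1 => conv K L Δ (LinearMap.id - Algebra.linearMap K UE ∘ₗ ε.toLinearMap)
      (convPowJ Δ ε n)

/-- The symmetrization `Sym(x₁ ⊗ ⋯ ⊗ x_m) = (1/m!) Σ_σ ι(x_{σ(1)}) ⋯ ι(x_{σ(m)}) ∈ U(g)`. -/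
def symProd (m : ℕ) (x : Fin m → L) : UE :=
  ((m.factorial : K)⁻¹) • ∑ σ : Equiv.Perm (Fin m),
    (List.ofFn fun i => UniversalEnvelopingAlgebra.ι K (x (σ i))).prod

open Finset

namespace PowerSeries

theorem coeff_pow_eq_zero_of_lt {R : Type*} [CommSemiring R] {f : R⟦X⟧}
    (hf : constantCoeff f = 0) {n k : ℕ} (h : n < k) : coeff n (f ^ k) = 0 := by
  obtain ⟨g, rfl⟩ := X_dvd_iff.mpr hf
  rw [mul_pow, coeff_X_pow_mul', if_neg (by omega)]

theorem coeff_subst_eq_sum_range {R : Type*} [CommRing R] {f g : R⟦X⟧}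
    (hg : constantCoeff g = 0) {n N : ℕ} (hN : n < N) :
    coeff n (f.subst g) = ∑ k ∈ range N, coeff k f * coeff n (g ^ k) := by
  rw [coeff_subst' (HasSubst.of_constantCoeff_zero' hg)]
  refine finsum_eq_sum_of_support_subset _ fun k hk ↦ mem_coe.mpr (mem_range.mpr ?_)
  by_contra! hkN
  exact hk (by simp [coeff_pow_eq_zero_of_lt hg (by omega : n < k)])

variable {A : Type*} [CommRing A] [Algebra ℚ A]

theorem mk_neg_one_pow_mul_one_add_X :
    (mk fun n ↦ algebraMap ℚ A ((-1 : ℚ) ^ n)) * (1 + X) = 1 := by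
  ext n
  rcases n with _ | n
  · simp
  · rw [mul_add, mul_one, map_add, coeff_succ_mul_X]
    simp [pow_succ]

/-- Both sides vanish at `0` and have derivative `1`, as `log' = 1 / (1 + X)` and
`(exp - 1)' = exp`. -/
theorem log_subst_exp_sub_one [IsAddTorsionFree A] : (log A).subst (exp A - 1) = X := by
  have hE : HasSubst (exp A - 1) := HasSubst.exp_sub_one
  refine derivative.ext ?_ ?_
  · rw [derivative_subst hE, deriv_log, derivative_X, map_sub, derivative_one, sub_zero,
      derivative_exp]
    calc _ = substAlgHom hE ((mk fun n ↦ algebraMap ℚ A ((-1 : ℚ) ^ n)) * (1 + X)) := by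
          rw [map_mul, map_add, map_one, coe_substAlgHom, subst_X hE, add_sub_cancel]
      _ = 1 := by rw [mk_neg_one_pow_mul_one_add_X, map_one]
  · rw [constantCoeff_X]
    refine constantCoeff_subst_eq_zero ?_ _ constantCoeff_log
    rw [map_sub, map_one, ← constantCoeff_eq, constantCoeff_exp, sub_self]

theorem factorial_mul_coeff_exp_sub_one_pow_succ (k n : ℕ) :
    (n.factorial : ℚ) * coeff n ((exp ℚ - 1) ^ (k + 1)) =
      ∑ p ∈ antidiagonal n, if p.1 = 0 then 0 else
        (n.choose p.1 : ℚ) * (p.2.factorial * coeff p.2 ((exp ℚ - 1) ^ k)) := by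
  rw [pow_succ', coeff_mul, mul_sum]
  refine sum_congr rfl fun ⟨i, j⟩ hij ↦ ?_
  obtain rfl : i + j = n := HasAntidiagonal.mem_antidiagonal.mp hij
  split_ifs with hi
  · simp only at hi; subst hi; simp
  · rw [map_sub, coeff_exp, coeff_one, if_neg hi, sub_zero,
      Nat.cast_choose ℚ (Nat.le_add_right _ _), Nat.add_sub_cancel_left, eq_ratCast, Rat.cast_id]
    have := i.factorial_pos
    field_simp

/-- Its coefficients are the `λ_n^{(m)}` defining the Eulerian idempotent `p_m`. -/
def eulerianSeries (m : ℕ) : ℚ⟦X⟧ := (m.factorial : ℚ)⁻¹ • log ℚ ^ m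

theorem eulerianSeries_subst_exp_sub_one (m : ℕ) :
    (eulerianSeries m).subst (exp ℚ - 1) = (m.factorial : ℚ)⁻¹ • X ^ m := by
  have hE : HasSubst (exp ℚ - 1) := HasSubst.exp_sub_one
  rw [eulerianSeries, subst_smul hE, subst_pow hE, log_subst_exp_sub_one]

theorem sum_coeff_eulerianSeries_mul_factorial_mul_coeff {m n N : ℕ} (hN : n < N) :
    ∑ k ∈ range N, coeff k (eulerianSeries m) *
      ((n.factorial : ℚ) * coeff n ((exp ℚ - 1) ^ k)) = if m = n then 1 else 0 := by
  have hE : constantCoeff (exp ℚ - 1) = 0 := by simp [constantCoeff_exp]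
  simp_rw [mul_left_comm _ (n.factorial : ℚ), ← mul_sum,
    ← coeff_subst_eq_sum_range hE hN, eulerianSeries_subst_exp_sub_one, coeff_smul, coeff_X_pow]
  rcases eq_or_ne m n with rfl | h
  · simp [Nat.factorial_ne_zero]
  · simp [h, h.symm]

end PowerSeries

namespace Finset

theorem sum_superset_neg_one_pow_card_compl {ι : Type*} [Fintype ι] [DecidableEq ι]
    (T : Finset ι) :
    ∑ S : Finset ι, (if T ⊆ S then (-1 : ℤ) ^ Sᶜ.card else 0) = if T = univ then 1 else 0 := by
  rw [← (Equiv.mk compl compl compl_compl compl_compl : Finset ι ≃ Finset ι).sum_comp]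
  simp only [Equiv.coe_fn_mk, compl_compl, subset_compl_comm (s := T), ← sum_filter,
    filter_subset_univ, sum_powerset_neg_one_pow_card, compl_eq_empty_iff]

theorem sum_surjective_eq_sum_perm {α M : Type*} [Fintype α] [DecidableEq α]
    [AddCommMonoid M] (g : (α → α) → M) :
    ∑ f : α → α with Function.Surjective f, g f = ∑ σ : Equiv.Perm α, g σ := by
  refine (sum_bij (fun (σ : Equiv.Perm α) _ ↦ ⇑σ) (fun σ _ ↦ by simp [σ.surjective])
    (fun _ _ _ _ ↦ Equiv.coe_inj.mp) (fun f hf ↦ ?_) (fun _ _ ↦ rfl)).symm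
  have hf : Function.Surjective f := (mem_filter.mp hf).2
  exact ⟨Equiv.ofBijective f hf.bijective_of_finite, mem_univ _, rfl⟩

variable {A : Type*} [Ring A]

theorem sum_pow_eq_sum_piFinset_prod_ofFn {ι : Type*} [DecidableEq ι] (S : Finset ι)
    (a : ι → A) (n : ℕ) :
    (∑ i ∈ S, a i) ^ n = ∑ f ∈ Fintype.piFinset fun _ : Fin n ↦ S, (List.ofFn (a ∘ f)).prod := by
  rw [← MultilinearMap.mkPiAlgebraFin_apply_const (R := ℤ), MultilinearMap.map_sum_finset]
  rfl

theorem sum_neg_one_pow_card_compl_smul_sum_pow {ι : Type*} [Fintype ι] [DecidableEq ι]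
    (a : ι → A) (n : ℕ) :
    ∑ S : Finset ι, (-1 : ℤ) ^ Sᶜ.card • (∑ i ∈ S, a i) ^ n =
      ∑ f : Fin n → ι with Function.Surjective f, (List.ofFn (a ∘ f)).prod := by
  set P : (Fin n → ι) → A := fun f ↦ (List.ofFn (a ∘ f)).prod
  calc _ = ∑ S : Finset ι, ∑ f : Fin n → ι,
        (if image f univ ⊆ S then (-1 : ℤ) ^ Sᶜ.card else 0) • P f := by
        refine sum_congr rfl fun S _ ↦ ?_
        simp_rw [sum_pow_eq_sum_piFinset_prod_ofFn, smul_sum, ite_smul, zero_smul, ← sum_filter]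
        congr 1
        ext f
        simp [image_subset_iff]
    _ = ∑ f : Fin n → ι, (if image f univ = univ then (1 : ℤ) else 0) • P f := by
        rw [sum_comm]
        simp_rw [← sum_smul, sum_superset_neg_one_pow_card_compl]
    _ = _ := by
        have hsurj (f : Fin n → ι) : image f univ = univ ↔ Function.Surjective f := by
          simp [eq_univ_iff_forall, Function.Surjective]
        simp_rw [ite_smul, one_smul, zero_smul, ← sum_filter, hsurj]

end Finset

section UniversalEnveloping

variable {K L}

local notation "ι" => UniversalEnvelopingAlgebra.ι K

omit [CharZero K] in
theorem symProd_eq_smul_sum_pow (m : ℕ) (x : Fin m → L) :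
    symProd K L m x =
      (m.factorial : K)⁻¹ • ∑ S : Finset (Fin m), (-1 : ℤ) ^ Sᶜ.card • ι (∑ i ∈ S, x i) ^ m := by
  simp_rw [symProd, map_sum, sum_neg_one_pow_card_compl_smul_sum_pow, sum_surjective_eq_sum_perm]
  rfl

omit [CharZero K] in
theorem map_symProd_of_map_pow {m : ℕ} (T : UE →ₗ[K] UE) (c : K)
    (hT : ∀ z : L, T (ι z ^ m) = c • ι z ^ m) (x : Fin m → L) :
    T (symProd K L m x) = c • symProd K L m x := by
  rw [symProd_eq_smul_sum_pow, map_smul, map_sum]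
  simp_rw [map_zsmul, hT, smul_comm _ c, ← smul_sum]
  exact smul_comm _ c _

omit [CharZero K] in
theorem comul_pow_of_primitive (Δ : UE →ₐ[K] UE ⊗[K] UE) {y : UE}
    (hy : Δ y = y ⊗ₜ[K] 1 + 1 ⊗ₜ[K] y) (n : ℕ) :
    Δ (y ^ n) = ∑ p ∈ antidiagonal n, n.choose p.1 • ((y ^ p.1) ⊗ₜ[K] (y ^ p.2)) := by
  have hcomm : Commute (y ⊗ₜ[K] (1 : UE)) (1 ⊗ₜ[K] y) := by
    simp [Commute, SemiconjBy, Algebra.TensorProduct.tmul_mul_tmul]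
  rw [map_pow, hy, hcomm.add_pow']
  simp_rw [Algebra.TensorProduct.tmul_pow, one_pow, Algebra.TensorProduct.tmul_mul_tmul, mul_one,
    one_mul]

theorem convPowJ_pow_of_primitive (Δ : UE →ₐ[K] UE ⊗[K] UE) (ε : UE →ₐ[K] K) {y : UE}
    (hΔy : Δ y = y ⊗ₜ[K] 1 + 1 ⊗ₜ[K] y) (hεy : ε y = 0) (k n : ℕ) :
    convPowJ K L Δ ε k (y ^ n) =
      ((n.factorial * PowerSeries.coeff n ((PowerSeries.exp ℚ - 1) ^ k) : ℚ) : K) • y ^ n := by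
  have hε (j : ℕ) : ε (y ^ j) = if j = 0 then 1 else 0 := by
    rw [map_pow, hεy, zero_pow_eq]
  induction k generalizing n with
  | zero =>
    rcases eq_or_ne n 0 with rfl | hn
    · simp [convPowJ]
    · simp [convPowJ, hε, hn, PowerSeries.coeff_one]
  | succ k ih =>
    have hJ (i : ℕ) :
        ((LinearMap.id : UE →ₗ[K] UE) - Algebra.linearMap K UE ∘ₗ ε.toLinearMap) (y ^ i) =
        if i = 0 then 0 else y ^ i := by
      rcases eq_or_ne i 0 with rfl | hi
      · simp
      · simp [hε, hi]
    have hterm (p : ℕ × ℕ) (hp : p ∈ antidiagonal n) :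
        LinearMap.mul' K UE (TensorProduct.map
          (LinearMap.id - Algebra.linearMap K UE ∘ₗ ε.toLinearMap) (convPowJ K L Δ ε k)
          (n.choose p.1 • ((y ^ p.1) ⊗ₜ[K] (y ^ p.2)))) =
        (((if p.1 = 0 then 0 else (n.choose p.1 : ℚ) *
          (p.2.factorial * PowerSeries.coeff p.2 ((PowerSeries.exp ℚ - 1) ^ k))) : ℚ) : K) •
            y ^ n := by
      obtain rfl : p.1 + p.2 = n := HasAntidiagonal.mem_antidiagonal.mp hp
      rw [map_nsmul, map_nsmul, TensorProduct.map_tmul, hJ, ih]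
      split_ifs
      · simp
      · rw [TensorProduct.tmul_smul, map_smul, LinearMap.mul'_apply, ← pow_add,
          ← Nat.cast_smul_eq_nsmul K, smul_smul]
        push_cast
        ring_nf
    rw [convPowJ, conv, LinearMap.comp_apply, LinearMap.comp_apply, AlgHom.toLinearMap_apply,
      comul_pow_of_primitive Δ hΔy, map_sum, map_sum, sum_congr rfl hterm, ← sum_smul,
      ← Rat.cast_sum, ← PowerSeries.factorial_mul_coeff_exp_sub_one_pow_succ]

theorem sum_coeff_eulerianSeries_smul_convPowJ_pow_of_primitive (Δ : UE →ₐ[K] UE ⊗[K] UE)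
    (ε : UE →ₐ[K] K) {y : UE} (hΔy : Δ y = y ⊗ₜ[K] 1 + 1 ⊗ₜ[K] y) (hεy : ε y = 0)
    {m n N : ℕ} (hN : n < N) :
    ∑ k ∈ range N, ((PowerSeries.coeff k (PowerSeries.eulerianSeries m) : ℚ) : K) •
      convPowJ K L Δ ε k (y ^ n) = if m = n then y ^ n else 0 := by
  simp_rw [convPowJ_pow_of_primitive Δ ε hΔy hεy, smul_smul, ← Rat.cast_mul, ← sum_smul,
    ← Rat.cast_sum, PowerSeries.sum_coeff_eulerianSeries_mul_factorial_mul_coeff hN]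
  split_ifs <;> simp

end UniversalEnveloping

theorem stmt4
    (Δ : UE →ₐ[K] UE ⊗[K] UE)
    (hΔ : ∀ x : L, Δ (UniversalEnvelopingAlgebra.ι K x) =
      UniversalEnvelopingAlgebra.ι K x ⊗ₜ[K] 1 + 1 ⊗ₜ[K] UniversalEnvelopingAlgebra.ι K x)
    (ε : UE →ₐ[K] K)
    (hε : ∀ x : L, ε (UniversalEnvelopingAlgebra.ι K x) = 0)
    (Lser : PowerSeries ℚ)
    (hL : ∀ n : ℕ, PowerSeries.coeff n Lser =
      if n = 0 then 0 else (-1 : ℚ) ^ (n - 1) / (n : ℚ))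
    (lam : ℕ → ℕ → ℚ)
    (hlam : ∀ m n : ℕ, lam m n = PowerSeries.coeff n ((m.factorial : ℚ)⁻¹ • Lser ^ m))
    (p : ℕ → (UE →ₗ[K] UE))
    (hp : ∀ (m : ℕ) (a : UE), ∃ N : ℕ, ∀ n ≥ N,
      p m a = ∑ k ∈ Finset.range n, ((lam m k : ℚ) : K) • convPowJ K L Δ ε k a) :
    ∀ (m m' : ℕ) (x : Fin m → L),
      p m' (symProd K L m x) = if m' = m then symProd K L m x else 0 := by
  intro m m' x
  have hLser : Lser = PowerSeries.log ℚ := by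
    ext (_ | n)
    · simp [hL]
    · simp [hL, pow_succ]
  have hlam' (k : ℕ) : lam m' k = PowerSeries.coeff k (PowerSeries.eulerianSeries m') := by
    rw [hlam, hLser, PowerSeries.eulerianSeries]
  have hpow (z : L) : p m' (UniversalEnvelopingAlgebra.ι K z ^ m) =
      (if m' = m then 1 else 0 : K) • UniversalEnvelopingAlgebra.ι K z ^ m := by
    obtain ⟨N, hN⟩ := hp m' (UniversalEnvelopingAlgebra.ι K z ^ m)
    rw [hN (max N (m + 1)) (le_max_left _ _)]
    simp_rw [hlam']
    rw [sum_coeff_eulerianSeries_smul_convPowJ_pow_of_primitive Δ ε (hΔ z) (hε z)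
      (Nat.lt_of_lt_of_le m.lt_succ_self (le_max_right _ _))]
    split_ifs <;> simp
  rw [map_symProd_of_map_pow (p m') _ hpow]
  split_ifs <;> simp
end
end
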